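/- arXiv:1502.05252 — 2 statements merged into one kernel-verified Lean document; each statement's English description precedes it below -/
import Mathlib

section
/- If b ≥ 0, then for every real number r with 0 ≤ r ≤ b one has e₁(r) ≥ a₁(r), and equality e₁(r) = a₁(r) holds if and only if r = 0 or r = b. -/
/-! With `t = q / p`, clearing denominators gives
`e₁ r - a₁ r = 2 r (b - r) / (m (2 r + 1))`, a downward parabola in `r` with roots `0` and `b`
divided by a positive quantity on `0 ≤ r`. -/

lemma e₁_sub_a₁_eq (m t r : ℝ) (hm : m ≠ 0) (hr : 2 * r + 1 ≠ 0) :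
    (m - r) / m * (1 + t) - (r + 1) / (2 * r + 1) * (1 - t * (2 * r - m) / m)
      = 2 * r * (t * (m + 1) / 2 + (m - 1) / 2 - r) / (m * (2 * r + 1)) := by
  -- `field_simp` rewrites `2 * r + 1` to `r * 2 + 1` and must find that form among the hypotheses
  rw [mul_comm 2 r] at *
  field_simp
  ring

theorem stmt_3_general (m : ℕ) (hm : 1 ≤ m) (p q : ℝ)
    (b : ℝ) (hb : b = (q / p) * (m + 1) / 2 + (m - 1) / 2)
    (e₁ : ℝ → ℝ) (he₁ : ∀ x : ℝ, e₁ x = ((m - x) / m) * (1 + q / p))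
    (c a₁ : ℝ → ℝ)
    (hc : ∀ r : ℝ, c r = 1 - (q / p) * (2 * r - m) / m)
    (ha₁ : ∀ r : ℝ, a₁ r = ((r + 1) / (2 * r + 1)) * c r) :
    ∀ r : ℝ, 0 ≤ r → r ≤ b →
      e₁ r ≥ a₁ r ∧ (e₁ r = a₁ r ↔ r = 0 ∨ r = b) := by
  intro r hr hrb
  have hm₀ : (0 : ℝ) < m := by exact_mod_cast hm
  have hden : (0 : ℝ) < m * (2 * r + 1) := by positivity
  have hgap : e₁ r - a₁ r = 2 * r * (b - r) / (m * (2 * r + 1)) := by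
    rw [he₁, ha₁, hc, hb]
    exact e₁_sub_a₁_eq m (q / p) r hm₀.ne' (by positivity)
  have hnonneg : 0 ≤ e₁ r - a₁ r :=
    hgap ▸ div_nonneg (mul_nonneg (by positivity) (sub_nonneg.2 hrb)) hden.le
  refine ⟨sub_nonneg.1 hnonneg, ?_⟩
  rw [← sub_eq_zero, hgap, div_eq_zero_iff, or_iff_left hden.ne', mul_eq_zero, mul_eq_zero,
    sub_eq_zero, eq_comm (a := b)]
  simp only [two_ne_zero, false_or]

/-- If `b ≥ 0`, then for every real `r` with `0 ≤ r ≤ b` one has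
`e₁ r ≥ a₁ r`, with equality iff `r = 0` or `r = b`. -/
theorem stmt_3 (m : ℕ) (hm : 1 ≤ m) (p q : ℝ) (hp : 0 < p)
    (b : ℝ) (hb : b = (q / p) * (m + 1) / 2 + (m - 1) / 2)
    (e₁ : ℝ → ℝ) (he₁ : ∀ x : ℝ, e₁ x = ((m - x) / m) * (1 + q / p))
    (c a₁ : ℝ → ℝ)
    (hc : ∀ r : ℝ, c r = 1 - (q / p) * (2 * r - m) / m)
    (ha₁ : ∀ r : ℝ, a₁ r = ((r + 1) / (2 * r + 1)) * c r)
    (hb0 : 0 ≤ b) :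
    ∀ r : ℝ, 0 ≤ r → r ≤ b →
      e₁ r ≥ a₁ r ∧ (e₁ r = a₁ r ↔ r = 0 ∨ r = b) :=
  stmt_3_general m hm p q b hb e₁ he₁ c a₁ hc ha₁
end

section
/- If b + 1 ≤ m, then for every real number r with b + 1 ≤ r ≤ m one has e₂(r) ≥ a₂(r), and equality e₂(r) = a₂(r) holds if and only if r = b + 1 or r = m. -/
/-!
With `t = q / p`, the difference `e₂ r - a₂ r` factors as
`2 (r - (b + 1)) (m - r) / (m (2m - 2r + 1))`. On `b + 1 ≤ r ≤ m` both linear factors and the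
denominator are nonnegative (the denominator is at least `1`), and the difference vanishes exactly
at the roots `r = b + 1` and `r = m` of the numerator.
-/

theorem diff_eq_two_mul_mul_div (m t r : ℝ) (hm : m ≠ 0) (hD : 2 * m - 2 * r + 1 ≠ 0) :
    r / m * (1 - t) - (m - r + 1) / (2 * m - 2 * r + 1) * (1 - t * (2 * r - m) / m)
      = 2 * (r - (t * (m + 1) / 2 + (m - 1) / 2 + 1)) * (m - r) / (m * (2 * m - 2 * r + 1)) := by
  -- `field_simp` would not match the denominator after normalizing it, so name it first.
  generalize hD_def : 2 * m - 2 * r + 1 = D at hD ⊢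
  field_simp
  rw [← hD_def]
  ring

theorem mul_div_nonneg_and_eq_zero_iff {u v d : ℝ} (hu : 0 ≤ u) (hv : 0 ≤ v) (hd : 0 < d) :
    0 ≤ 2 * u * v / d ∧ (2 * u * v / d = 0 ↔ u = 0 ∨ v = 0) := by
  refine ⟨by positivity, ?_⟩
  rw [div_eq_zero_iff, or_iff_left hd.ne', mul_eq_zero, mul_eq_zero, or_iff_right two_ne_zero]

theorem stmt_5_general (m : ℕ) (hm : 1 ≤ m) (p q : ℝ)
    (b : ℝ) (hb : b = (q / p) * (m + 1) / 2 + (m - 1) / 2)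
    (e₂ : ℝ → ℝ) (he₂ : ∀ x : ℝ, e₂ x = (x / m) * (1 - q / p))
    (c a₂ : ℝ → ℝ)
    (hc : ∀ r : ℝ, c r = 1 - (q / p) * (2 * r - m) / m)
    (ha₂ : ∀ r : ℝ, a₂ r = ((m - r + 1) / (2 * m - 2 * r + 1)) * c r) :
    ∀ r : ℝ, b + 1 ≤ r → r ≤ m →
      e₂ r ≥ a₂ r ∧ (e₂ r = a₂ r ↔ r = b + 1 ∨ r = m) := by
  intro r hbr hrm
  have hm_pos : (0 : ℝ) < m := by exact_mod_cast hm
  have hD : (0 : ℝ) < 2 * m - 2 * r + 1 := by linarith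
  have hfactor : e₂ r - a₂ r
      = 2 * (r - (b + 1)) * (m - r) / (m * (2 * m - 2 * r + 1)) := by
    rw [he₂, ha₂, hc, hb]
    exact diff_eq_two_mul_mul_div _ _ _ hm_pos.ne' hD.ne'
  obtain ⟨hnonneg, hzero⟩ := mul_div_nonneg_and_eq_zero_iff
    (sub_nonneg.mpr hbr) (sub_nonneg.mpr hrm) (mul_pos hm_pos hD)
  rw [← hfactor] at hnonneg hzero
  refine ⟨sub_nonneg.mp hnonneg, ?_⟩
  rw [← sub_eq_zero, hzero, sub_eq_zero, sub_eq_zero, eq_comm (a := (m : ℝ))]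

/-- If `b + 1 ≤ m`, then for every real `r` with `b + 1 ≤ r ≤ m`
one has `e₂ r ≥ a₂ r`, with equality iff `r = b + 1` or `r = m`. -/
theorem stmt_5 (m : ℕ) (hm : 1 ≤ m) (p q : ℝ) (hp : 0 < p)
    (b : ℝ) (hb : b = (q / p) * (m + 1) / 2 + (m - 1) / 2)
    (e₂ : ℝ → ℝ) (he₂ : ∀ x : ℝ, e₂ x = (x / m) * (1 - q / p))
    (c a₂ : ℝ → ℝ)
    (hc : ∀ r : ℝ, c r = 1 - (q / p) * (2 * r - m) / m)
    (ha₂ : ∀ r : ℝ, a₂ r = ((m - r + 1) / (2 * m - 2 * r + 1)) * c r)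
    (hbm : b + 1 ≤ m) :
    ∀ r : ℝ, b + 1 ≤ r → r ≤ m →
      e₂ r ≥ a₂ r ∧ (e₂ r = a₂ r ↔ r = b + 1 ∨ r = m) :=
  stmt_5_general m hm p q b hb e₂ he₂ c a₂ hc ha₂
end
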